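/- Let G be a finite directed graph with n vertices and let s and v be two distinct vertices of G. There exists an arborescence T of G rooted at s containing v such that the unique path in T from s to v has length exactly n − 1 if and only if G contains a Hamiltonian path from s to v, i.e. a path from s to v that visits every vertex of G exactly once. (This equivalence is the core of the reduction from the Hamiltonian path problem showing that deciding the existence of a perfect consistent tree is NP-complete.) -/

import Mathlib

/-- `IsWalk E u v l`: the nonempty list `l` of vertices is a walk from `u` to `v`
along the edge relation `E` (consecutive vertices are joined by an edge). -/
def IsWalk {V : Type*} (E : V → V → Prop) (u v : V) (l : List V) : Prop :=
  l.head? = some u ∧ l.getLast? = some v ∧ l.Chain' E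

/-- The length (number of edges) of a walk given by its list of vertices. -/
def wlen {V : Type*} (l : List V) : ℕ := l.length - 1

/-- `v` is reachable from `u` along the edge relation `E`. -/
def Reach {V : Type*} (E : V → V → Prop) (u v : V) : Prop := ∃ l, IsWalk E u v l

/-- The distance from `u` to `v`: the minimum length of a walk from `u` to `v`
(equal to `0` by convention when `v` is not reachable from `u`). -/
noncomputable def gdist {V : Type*} (E : V → V → Prop) (u v : V) : ℕ :=
  sInf {n | ∃ l, IsWalk E u v l ∧ wlen l = n}

/-- An arborescence of the graph with edge relation `E`, rooted at `s`:
a subgraph (given by its vertex set and edge relation) containing `s`,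
in which every vertex is joined from `s` by a unique path. -/
structure Arb {V : Type*} (E : V → V → Prop) (s : V) where
  verts : Set V
  edges : V → V → Prop
  edges_sub : ∀ u v, edges u v → E u v
  edges_mem : ∀ u v, edges u v → u ∈ verts ∧ v ∈ verts
  root_mem : s ∈ verts
  unique_walk : ∀ v ∈ verts, ∃! l, IsWalk edges s v l

/-!
In an arborescence the walk from the root to a vertex is a path: if it visited some vertex
twice, its two prefixes ending there would be distinct walks from the root to that vertex.
So a walk of length `n - 1` in an arborescence visits `n` distinct vertices, i.e. all of them.
Conversely, a Hamiltonian path, viewed as a subgraph, is an arborescence: the root has no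
incoming edge and every other vertex exactly one, so a walk from the root is recovered from
its endpoint by following incoming edges backwards.
-/

section

variable {V : Type*} {R E : V → V → Prop} {s u : V} {l : List V}

theorem isWalk_iff : IsWalk R s u l ↔ l.head? = some s ∧ l.getLast? = some u ∧ l.IsChain R :=
  Iff.rfl

namespace IsWalk

theorem ne_nil (h : IsWalk R s u l) : l ≠ [] := by
  rintro rfl
  simp [isWalk_iff] at h

theorem mono (hRE : ∀ a b, R a b → E a b) (h : IsWalk R s u l) : IsWalk E s u l :=
  ⟨h.1, h.2.1, List.IsChain.imp hRE h.2.2⟩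

theorem take (h : IsWalk R s u l) {i : ℕ} (hi : i < l.length) :
    IsWalk R s l[i] (l.take (i + 1)) := by
  refine ⟨?_, ?_, List.IsChain.take h.2.2 _⟩
  · rw [List.head?_take, if_neg (by omega)]
    exact h.1
  · rw [List.getLast?_take, if_neg (by omega)]
    simp [List.getElem?_eq_getElem hi]

end IsWalk

theorem isWalk_concat_iff {a : V} :
    IsWalk R s u (l ++ [a]) ↔ a = u ∧ (l = [] ∧ s = a ∨ ∃ p, IsWalk R s p l ∧ R p a) := by
  rcases l.eq_nil_or_concat with rfl | ⟨l, b, rfl⟩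
  · simp [isWalk_iff, and_comm, eq_comm]
  · simp [isWalk_iff, List.isChain_append, List.head?_append, and_comm, and_left_comm]

theorem IsWalk.eq_of_unique_pred (h₀ : ∀ x, ¬ R x s) (h₁ : ∀ a b c, R a c → R b c → a = b)
    {l₁ l₂ : List V} (hw₁ : IsWalk R s u l₁) (hw₂ : IsWalk R s u l₂) : l₁ = l₂ := by
  induction l₁ using List.reverseRecOn generalizing u l₂ with
  | nil => exact absurd rfl hw₁.ne_nil
  | append_singleton l₁ a ih =>
    obtain ⟨l₂, b, rfl⟩ := l₂.eq_nil_or_concat.resolve_left hw₂.ne_nil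
    rw [List.concat_eq_append, isWalk_concat_iff] at hw₂
    rw [isWalk_concat_iff] at hw₁
    obtain ⟨rfl, ⟨rfl, rfl⟩ | ⟨p, hp, hpa⟩⟩ := hw₁ <;>
      obtain ⟨rfl, ⟨rfl, hs⟩ | ⟨q, hq, hqa⟩⟩ := hw₂
    · rfl
    · exact absurd hqa (h₀ q)
    · exact absurd (hs ▸ hpa) (h₀ p)
    · rw [List.concat_eq_append, ih (h₁ p q _ hpa hqa ▸ hp) hq]

namespace Arb

theorem mem_verts_of_isWalk (T : Arb E s) (h : IsWalk T.edges s u l) : u ∈ T.verts := by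
  obtain ⟨l, b, rfl⟩ := l.eq_nil_or_concat.resolve_left h.ne_nil
  rw [List.concat_eq_append, isWalk_concat_iff] at h
  obtain ⟨rfl, ⟨-, rfl⟩ | ⟨p, -, hp⟩⟩ := h
  · exact T.root_mem
  · exact (T.edges_mem p b hp).2

theorem nodup_of_isWalk (T : Arb E s) (h : IsWalk T.edges s u l) : l.Nodup := by
  rw [List.nodup_iff_injective_getElem]
  intro i j hij
  have hi := h.take i.2
  have hj := h.take j.2
  simp only at hij
  rw [hij] at hi
  have := congrArg List.length ((T.unique_walk _ (T.mem_verts_of_isWalk hj)).unique hi hj)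
  simp only [List.length_take] at this
  omega

end Arb

def pathRel (l : List V) (a b : V) : Prop := ∃ i, l[i]? = some a ∧ l[i + 1]? = some b

theorem isChain_pathRel (l : List V) : l.IsChain (pathRel l) :=
  List.isChain_iff_getElem.mpr fun i hi => ⟨i, by simp, by simp⟩

theorem pathRel_le (h : l.IsChain E) {a b : V} (hab : pathRel l a b) : E a b := by
  obtain ⟨i, hi, hi'⟩ := hab
  obtain ⟨hlt, rfl⟩ := List.getElem?_eq_some_iff.mp hi'
  obtain ⟨-, rfl⟩ := List.getElem?_eq_some_iff.mp hi
  exact List.isChain_iff_getElem.mp h i hlt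

theorem mem_of_pathRel {a b : V} : pathRel l a b → a ∈ l ∧ b ∈ l
  | ⟨_, ha, hb⟩ => ⟨List.mem_of_getElem? ha, List.mem_of_getElem? hb⟩

theorem List.Nodup.not_pathRel_head (hl : l.Nodup) (hs : l.head? = some s) (a : V) :
    ¬ pathRel l a s := by
  rintro ⟨i, -, hi⟩
  rw [List.head?_eq_getElem?, ← hi] at hs
  have := (List.getElem?_inj (List.getElem?_eq_some_iff.mp hi).1 hl).mp hs.symm
  omega

theorem List.Nodup.pathRel_left_unique (hl : l.Nodup) {a b c : V} (ha : pathRel l a c)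
    (hb : pathRel l b c) : a = b := by
  obtain ⟨i, hia, hic⟩ := ha
  obtain ⟨j, hjb, hjc⟩ := hb
  obtain rfl : i = j := by
    have := (List.getElem?_inj (List.getElem?_eq_some_iff.mp hic).1 hl).mp (hic.trans hjc.symm)
    omega
  exact Option.some_injective _ (hia.symm.trans hjb)

theorem IsWalk.along_pathRel (h : IsWalk E s u l) : IsWalk (pathRel l) s u l :=
  ⟨h.1, h.2.1, isChain_pathRel l⟩

def Arb.ofPath (hl : IsWalk E s u l) (hnd : l.Nodup) : Arb E s where
  verts := {x | x ∈ l}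
  edges := pathRel l
  edges_sub _ _ := pathRel_le hl.2.2
  edges_mem _ _ := mem_of_pathRel
  root_mem := List.mem_of_mem_head? hl.1
  unique_walk x hx := by
    obtain ⟨i, hi, rfl⟩ := List.getElem_of_mem hx
    refine ⟨_, hl.along_pathRel.take hi, fun m hm => ?_⟩
    exact hm.eq_of_unique_pred (hnd.not_pathRel_head hl.1)
      (fun _ _ _ => hnd.pathRel_left_unique) (hl.along_pathRel.take hi)

theorem List.Nodup.forall_mem_iff_length_eq_card [Fintype V] (hl : l.Nodup) :
    (∀ u, u ∈ l) ↔ l.length = Fintype.card V := by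
  classical
  rw [← List.toFinset_card_of_nodup hl, Finset.card_eq_iff_eq_univ, Finset.eq_univ_iff_forall]
  simp

end

theorem stmt_8_general {V : Type*} [Fintype V] (E : V → V → Prop) (s v : V) :
    (∃ T : Arb E s, v ∈ T.verts ∧
        ∀ l, IsWalk T.edges s v l → wlen l = Fintype.card V - 1) ↔
      ∃ l, IsWalk E s v l ∧ l.Nodup ∧ ∀ u : V, u ∈ l := by
  constructor
  · rintro ⟨T, hv, hlen⟩
    obtain ⟨l, hl, -⟩ := T.unique_walk v hv
    have hnd := T.nodup_of_isWalk hl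
    refine ⟨l, hl.mono T.edges_sub, hnd, hnd.forall_mem_iff_length_eq_card.mpr ?_⟩
    have hlen := hlen l hl
    have hl₀ := List.length_pos_iff.mpr hl.ne_nil
    have hV₀ := Fintype.card_pos_iff.mpr ⟨s⟩
    unfold wlen at hlen
    omega
  · rintro ⟨l, hl, hnd, hcov⟩
    let T := Arb.ofPath hl hnd
    have hv : v ∈ T.verts := List.mem_of_getLast? hl.2.1
    refine ⟨T, hv, fun m hm => ?_⟩
    rw [(T.unique_walk v hv).unique hm hl.along_pathRel, wlen,
      hnd.forall_mem_iff_length_eq_card.mp hcov]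

/-- Core of the reduction from the Hamiltonian path problem for perfect consistent
trees: for distinct vertices `s` and `v` of a graph with `n` vertices, there is an
arborescence rooted at `s` containing `v` in which the unique path from `s` to `v`
has length exactly `n - 1` iff the graph contains a Hamiltonian path from `s` to
`v` (a path visiting every vertex exactly once). -/
theorem stmt_8 {V : Type*} [Fintype V] (E : V → V → Prop) (s v : V) (hsv : s ≠ v) :
    (∃ T : Arb E s, v ∈ T.verts ∧
        ∀ l, IsWalk T.edges s v l → wlen l = Fintype.card V - 1) ↔
      ∃ l, IsWalk E s v l ∧ l.Nodup ∧ ∀ u : V, u ∈ l :=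
  stmt_8_general E s v
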